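/- arXiv:1206.2941 — 2 statements merged into one kernel-verified Lean document; each statement's English description precedes it below -/
import Mathlib

section
/- Let G be an ∞-groupoid of type C. The groupoid Π_n(G) does not depend on the choice of the lifting morphisms ∇_n : D_n → D_n ∐_{D_{n-1}} D_n and κ_{n-1} : D_n → D_{n-1} in C used to define composition and units: if ∇'_n and κ'_{n-1} are other liftings with the same globular source and target, the induced groupoid structures on Π_n(G) coincide. -/
/-!
STATEMENT 5: Let `G` be an ∞-groupoid of type `C`.  The groupoid `Π_n(G)` does not
depend on the choice of the liftings `∇_n : D_n ⟶ D_n ∐_{D_{n-1}} D_n` and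
`κ_{n-1} : D_n ⟶ D_{n-1}` in `C` used to define composition and units: if `∇'_n`
and `κ'_{n-1}` are other liftings with the same globular source and target, the
induced groupoid structures on `Π_n(G)` coincide, i.e. the induced compositions and
units agree up to homotopy (hence agree after passing to the quotient `Π_n(G)`).
Here `n = m + 1`.
-/

open CategoryTheory Opposite

universe w v u

/-- A coglobular object: a category under the globe category 𝔾. -/
structure Coglob (E : Type u) [Category.{v} E] where
  D : ℕ → E
  σ : ∀ n, D n ⟶ D (n + 1)
  τ : ∀ n, D n ⟶ D (n + 1)
  relσ : ∀ n, σ n ≫ σ (n + 1) = σ n ≫ τ (n + 1)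
  relτ : ∀ n, τ n ≫ σ (n + 1) = τ n ≫ τ (n + 1)

namespace Coglob

variable {E : Type u} [Category.{v} E] (Φ : Coglob E)

/-- Iterated cosource `σ^{j+k}_j : D j ⟶ D (j+k)`. -/
def σUp (j : ℕ) : ∀ k : ℕ, Φ.D j ⟶ Φ.D (j + k)
  | 0 => 𝟙 _
  | k + 1 => σUp j k ≫ Φ.σ (j + k)

/-- Iterated cotarget `τ^{j+k}_j : D j ⟶ D (j+k)`. -/
def τUp (j : ℕ) : ∀ k : ℕ, Φ.D j ⟶ Φ.D (j + k)
  | 0 => 𝟙 _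
  | k + 1 => τUp j k ≫ Φ.τ (j + k)

lemma τUp_σ (j k : ℕ) :
    Φ.τUp j (k + 1) ≫ Φ.σ (j + k + 1) = Φ.τUp j (k + 2) := by
  show (Φ.τUp j k ≫ Φ.τ (j + k)) ≫ Φ.σ (j + k + 1) =
    (Φ.τUp j k ≫ Φ.τ (j + k)) ≫ Φ.τ (j + k + 1)
  rw [Category.assoc, Category.assoc, Φ.relτ]

lemma σUp_τ (j k : ℕ) :
    Φ.σUp j (k + 1) ≫ Φ.τ (j + k + 1) = Φ.σUp j (k + 2) := by
  show (Φ.σUp j k ≫ Φ.σ (j + k)) ≫ Φ.τ (j + k + 1) =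
    (Φ.σUp j k ≫ Φ.σ (j + k)) ≫ Φ.σ (j + k + 1)
  rw [Category.assoc, Category.assoc, Φ.relσ]

/-- Iterated cosource `D 0 ⟶ D n`. -/
def σZero : ∀ n : ℕ, Φ.D 0 ⟶ Φ.D n
  | 0 => 𝟙 _
  | n + 1 => σZero n ≫ Φ.σ n

/-- Globular parallelism of two morphisms with source a globe `D n`. -/
def Par : ∀ {n : ℕ} {Y : E}, (Φ.D n ⟶ Y) → (Φ.D n ⟶ Y) → Prop
  | 0, _, _, _ => True
  | m + 1, _, f, g => (Φ.σ m ≫ f = Φ.σ m ≫ g) ∧ (Φ.τ m ≫ f = Φ.τ m ≫ g)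

end Coglob

/-- Tables of dimensions, indexed by the dimension of the first globe: the table
`cons j d e T` glues a disk of dimension `j + d + 1` along the dimension `j` onto a
table whose first dimension is `j + e + 1` (so that both dimensions exceed the
gluing dimension, as required for a table of dimensions). -/
inductive GTable : ℕ → Type where
  | single (i : ℕ) : GTable i
  | cons (j d e : ℕ) (T : GTable (j + e + 1)) : GTable (j + d + 1)

/-- Dimension of a table: the greatest dimension appearing in it. -/
def GTable.dim : ∀ {i : ℕ}, GTable i → ℕ
  | _, .single i => i
  | _, .cons j d _ T => max (j + d + 1) T.dim

/-- Chosen globular sums on a category under 𝔾: for every table of dimensions, an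
iterated amalgamated sum of globes, glued along iterated cosources and cotargets,
with its universal property. This is the structure of a globular extension. -/
structure GSums {E : Type u} [Category.{v} E] (Φ : Coglob E) where
  S : ∀ {i : ℕ}, GTable i → E
  single_eq : ∀ i, S (.single i) = Φ.D i
  ι : ∀ {i : ℕ} (T : GTable i), Φ.D i ⟶ S T
  ι_single : ∀ i, ι (.single i) = eqToHom (single_eq i).symm
  ρ : ∀ {j d e : ℕ} (T : GTable (j + e + 1)), S T ⟶ S (.cons j d e T)
  glue : ∀ {j d e : ℕ} (T : GTable (j + e + 1)),
    Φ.σUp j (d + 1) ≫ ι (.cons j d e T) = Φ.τUp j (e + 1) ≫ ι T ≫ ρ T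
  desc : ∀ {j d e : ℕ} (T : GTable (j + e + 1)) {Y : E}
    (f : Φ.D (j + d + 1) ⟶ Y) (g : S T ⟶ Y),
    Φ.σUp j (d + 1) ≫ f = Φ.τUp j (e + 1) ≫ ι T ≫ g → (S (.cons j d e T) ⟶ Y)
  ι_desc : ∀ {j d e : ℕ} (T : GTable (j + e + 1)) {Y : E}
    (f : Φ.D (j + d + 1) ⟶ Y) (g : S T ⟶ Y) (h), ι (.cons j d e T) ≫ desc T f g h = f
  ρ_desc : ∀ {j d e : ℕ} (T : GTable (j + e + 1)) {Y : E}
    (f : Φ.D (j + d + 1) ⟶ Y) (g : S T ⟶ Y) (h), ρ T ≫ desc T f g h = g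
  hom_ext : ∀ {j d e : ℕ} (T : GTable (j + e + 1)) {Y : E}
    (m m' : S (.cons j d e T) ⟶ Y),
    ι (.cons j d e T) ≫ m = ι (.cons j d e T) ≫ m' → ρ T ≫ m = ρ T ≫ m' → m = m'

namespace GSums

variable {E : Type u} [Category.{v} E] {Φ : Coglob E} (GS : GSums Φ)

/-- The binary globular sum `D (j+k+1) ∐_{D j} D (j+k+1)`. -/
def Btab (j k : ℕ) : GTable (j + k + 1) := .cons j k k (.single (j + k + 1))

/-- First canonical morphism `ε₁ : D (j+k+1) ⟶ D (j+k+1) ∐_{D j} D (j+k+1)`. -/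
def ε₁ (j k : ℕ) : Φ.D (j + k + 1) ⟶ GS.S (Btab j k) := GS.ι (Btab j k)

/-- Second canonical morphism `ε₂ : D (j+k+1) ⟶ D (j+k+1) ∐_{D j} D (j+k+1)`. -/
def ε₂ (j k : ℕ) : Φ.D (j + k + 1) ⟶ GS.S (Btab j k) :=
  eqToHom (GS.single_eq (j + k + 1)).symm ≫ GS.ρ (GTable.single (j + k + 1))

/-- `C` is `(∞,0)`-contractible: every admissible pair admits a lifting; a pair
`(f, g) : D n ⟶ S` is admissible when `S` is a globular sum of dimension `≤ n + 1`
and `f, g` are globularly parallel. -/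
def Contractible : Prop :=
  ∀ (n : ℕ) {i : ℕ} (T : GTable i), T.dim ≤ n + 1 →
    ∀ f g : Φ.D n ⟶ GS.S T, Φ.Par f g →
      ∃ h : Φ.D (n + 1) ⟶ GS.S T, Φ.σ n ≫ h = f ∧ Φ.τ n ≫ h = g

/-- A presheaf `X` on `C` is a model (an ∞-groupoid of type `C`) when it sends each
globular sum to the corresponding iterated fiber product; equivalently each
amalgamation stage is sent to a pullback of sets. -/
def IsModel (X : Eᵒᵖ ⥤ Type w) : Prop :=
  ∀ {j d e : ℕ} (T : GTable (j + e + 1))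
    (a : X.obj (op (Φ.D (j + d + 1)))) (b : X.obj (op (GS.S T))),
    X.map (Φ.σUp j (d + 1)).op a = X.map (Φ.τUp j (e + 1) ≫ GS.ι T).op b →
      ∃! x : X.obj (op (GS.S (.cons j d e T))),
        X.map (GS.ι (.cons j d e T)).op x = a ∧ X.map (GS.ρ T).op x = b

/-- The amalgamated sum `f ∐_{D j} f` of an endo-cosimplicial-type map of globes. -/
def amalgMap (j k : ℕ) (f : Φ.D (j + k + 1) ⟶ Φ.D (j + k + 2))
    (hσ : Φ.σUp j (k + 1) ≫ f = Φ.σUp j (k + 2))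
    (hτ : Φ.τUp j (k + 1) ≫ f = Φ.τUp j (k + 2)) :
    GS.S (Btab j k) ⟶ GS.S (Btab j (k + 1)) :=
  GS.desc (GTable.single (j + k + 1)) (f ≫ GS.ε₁ j (k + 1))
    (eqToHom (GS.single_eq (j + k + 1)) ≫ f ≫ GS.ε₂ j (k + 1)) (by
      have h1 := GS.glue (j := j) (d := k + 1) (e := k + 1) (GTable.single (j + (k + 1) + 1))
      rw [GS.ι_single] at h1
      simp only [GS.ι_single, ← Category.assoc, hσ]
      simp only [Category.assoc, eqToHom_trans, eqToHom_refl, Category.id_comp]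
      rw [← Category.assoc, hτ]
      exact h1)

/-- The amalgamated sum `σ ∐_{D j} σ`. -/
def amalgσ (j k : ℕ) : GS.S (Btab j k) ⟶ GS.S (Btab j (k + 1)) :=
  GS.amalgMap j k (Φ.σ (j + k + 1)) rfl (Φ.τUp_σ j k)

/-- The amalgamated sum `τ ∐_{D j} τ`. -/
def amalgτ (j k : ℕ) : GS.S (Btab j k) ⟶ GS.S (Btab j (k + 1)) :=
  GS.amalgMap j k (Φ.τ (j + k + 1)) (Φ.σUp_τ j k) rfl

end GSums

/-- A pregroupoidal structure on a (contractible) globular extension: chosen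
coherence morphisms `∇^i_j`, `κ_i` and `w^i_j` for compositions, units and inverses,
each a lifting of the corresponding admissible pair. -/
structure Pregroupoidal {E : Type u} [Category.{v} E] {Φ : Coglob E} (GS : GSums Φ) where
  nabla : ∀ j k, Φ.D (j + k + 1) ⟶ GS.S (GSums.Btab j k)
  kappa : ∀ n, Φ.D (n + 1) ⟶ Φ.D n
  winv : ∀ j k, Φ.D (j + k + 1) ⟶ Φ.D (j + k + 1)
  kappa_σ : ∀ n, Φ.σ n ≫ kappa n = 𝟙 (Φ.D n)
  kappa_τ : ∀ n, Φ.τ n ≫ kappa n = 𝟙 (Φ.D n)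
  nabla_σ₀ : ∀ j, Φ.σ j ≫ nabla j 0 = Φ.σ j ≫ GS.ε₂ j 0
  nabla_τ₀ : ∀ j, Φ.τ j ≫ nabla j 0 = Φ.τ j ≫ GS.ε₁ j 0
  nabla_σ : ∀ j k, Φ.σ (j + k + 1) ≫ nabla j (k + 1) = nabla j k ≫ GS.amalgσ j k
  nabla_τ : ∀ j k, Φ.τ (j + k + 1) ≫ nabla j (k + 1) = nabla j k ≫ GS.amalgτ j k
  winv_σ₀ : ∀ j, Φ.σ j ≫ winv j 0 = Φ.τ j
  winv_τ₀ : ∀ j, Φ.τ j ≫ winv j 0 = Φ.σ j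
  winv_σ : ∀ j k, Φ.σ (j + k + 1) ≫ winv j (k + 1) = winv j k ≫ Φ.σ (j + k + 1)
  winv_τ : ∀ j k, Φ.τ (j + k + 1) ≫ winv j (k + 1) = winv j k ≫ Φ.τ (j + k + 1)

section ModelOps

variable {E : Type u} [Category.{v} E] {Φ : Coglob E} {GS : GSums Φ}
variable (X : Eᵒᵖ ⥤ Type w)

/-- The set of `n`-arrows of a globular presheaf. -/
def arr (n : ℕ) : Type w := X.obj (op (Φ.D n))

variable {X}

/-- Source of an `(n+1)`-arrow. -/
def asrc {n : ℕ} (u : arr (Φ := Φ) X (n + 1)) : arr (Φ := Φ) X n :=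
  X.map (Φ.σ n).op u

/-- Target of an `(n+1)`-arrow. -/
def atgt {n : ℕ} (u : arr (Φ := Φ) X (n + 1)) : arr (Φ := Φ) X n :=
  X.map (Φ.τ n).op u

/-- Homotopy of `n`-arrows: existence of a connecting `(n+1)`-arrow. -/
def Htp (n : ℕ) (u v : arr (Φ := Φ) X n) : Prop :=
  ∃ h : arr (Φ := Φ) X (n + 1), asrc h = u ∧ atgt h = v

/-- Composability in codimension `k+1`: the iterated `j`-source of `u` agrees with
the iterated `j`-target of `v`. -/
def Composable (j k : ℕ) (u v : arr (Φ := Φ) X (j + k + 1)) : Prop :=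
  X.map (Φ.σUp j (k + 1)).op u = X.map (Φ.τUp j (k + 1)).op v

/-- The element of `X` of the binary globular sum determined by a composable pair,
via the model (fiber product) condition. -/
noncomputable def pairUp (hm : GS.IsModel X) {j k : ℕ}
    (u v : arr (Φ := Φ) X (j + k + 1)) (hc : Composable j k u v) :
    X.obj (op (GS.S (GSums.Btab j k))) :=
  (hm (GTable.single (j + k + 1)) u
    (X.map (eqToHom (GS.single_eq (j + k + 1))).op v) (by
      erw [← FunctorToTypes.map_comp_apply, ← op_comp, Category.assoc, GS.ι_single,
        eqToHom_trans, eqToHom_refl, Category.comp_id]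
      exact hc)).exists.choose

/-- The composition `u *^{j+k+1}_j v` of arrows (`u` after `v`) induced by the chosen
morphism `∇^{j+k+1}_j`; defined as `u` on non-composable pairs. -/
noncomputable def gcomp (hm : GS.IsModel X) (P : Pregroupoidal GS)
    (j k : ℕ) (u v : arr (Φ := Φ) X (j + k + 1)) : arr (Φ := Φ) X (j + k + 1) := by
  classical
  exact if hc : Composable j k u v then X.map (P.nabla j k).op (pairUp hm u v hc) else u

/-- The unit `(n+1)`-arrow on an `n`-arrow, induced by `κ_n`. -/
def gunit (P : Pregroupoidal GS) {n : ℕ} (u : arr (Φ := Φ) X n) :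
    arr (Φ := Φ) X (n + 1) :=
  X.map (P.kappa n).op u

/-- The inverse `w^{j}_{j+k+1}` of an arrow. -/
def gwinv (P : Pregroupoidal GS) (j k : ℕ) (u : arr (Φ := Φ) X (j + k + 1)) :
    arr (Φ := Φ) X (j + k + 1) :=
  X.map (P.winv j k).op u

/-- Iterated counit `D n ⟶ D 0`. -/
def kDown (P : Pregroupoidal GS) : ∀ n : ℕ, Φ.D n ⟶ Φ.D 0
  | 0 => 𝟙 _
  | n + 1 => P.kappa n ≫ kDown P n

/-- The iterated unit `n`-arrow on an object. -/
def unitIter (P : Pregroupoidal GS) (n : ℕ) (x : arr (Φ := Φ) X 0) :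
    arr (Φ := Φ) X n :=
  X.map (kDown P n).op x

end ModelOps

/-! The pairs `(∇, ∇')` and `(κ, κ')` are admissible, so contractibility provides a lifting of
each, and the model `X` sends a lifting between two coherence morphisms to a homotopy between
the operations they induce. -/

lemma Coglob.Par.comp_right {E : Type u} [Category.{v} E] {Φ : Coglob E} :
    ∀ {n : ℕ} {Y Z : E} {f g : Φ.D n ⟶ Y}, Φ.Par f g → ∀ k : Y ⟶ Z, Φ.Par (f ≫ k) (g ≫ k)
  | 0, _, _, _, _, _, _ => trivial
  | _ + 1, _, _, _, _, ⟨hσ, hτ⟩, k => by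
    refine ⟨?_, ?_⟩ <;> simp only [← Category.assoc, hσ, hτ]

section Homotopy

variable {E : Type u} [Category.{v} E] {Φ : Coglob E} {GS : GSums Φ} (X : Eᵒᵖ ⥤ Type w)

lemma htp_map_of_lifting {n : ℕ} {Y : E} {f g : Φ.D n ⟶ Y} (h : Φ.D (n + 1) ⟶ Y)
    (hσ : Φ.σ n ≫ h = f) (hτ : Φ.τ n ≫ h = g) (y : X.obj (op Y)) :
    Htp (Φ := Φ) n (X.map f.op y) (X.map g.op y) :=
  ⟨X.map h.op y, by subst hσ; exact (X.map_comp_apply _ _ y).symm,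
    by subst hτ; exact (X.map_comp_apply _ _ y).symm⟩

lemma GSums.Contractible.htp_map (hC : GS.Contractible) {n i : ℕ} (T : GTable i)
    (hT : T.dim ≤ n + 1) {f g : Φ.D n ⟶ GS.S T} (hfg : Φ.Par f g) (y : X.obj (op (GS.S T))) :
    Htp (Φ := Φ) n (X.map f.op y) (X.map g.op y) := by
  obtain ⟨h, hσ, hτ⟩ := hC n T hT f g hfg
  exact htp_map_of_lifting X h hσ hτ y

lemma GSums.Contractible.htp_map_globe (hC : GS.Contractible) {n i : ℕ} (hi : i ≤ n + 1)
    {f g : Φ.D n ⟶ Φ.D i} (hfg : Φ.Par f g) (x : X.obj (op (Φ.D i))) :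
    Htp (Φ := Φ) n (X.map f.op x) (X.map g.op x) := by
  have hx : ∀ k : Φ.D n ⟶ Φ.D i, X.map k.op x =
      X.map (k ≫ eqToHom (GS.single_eq i).symm).op (X.map (eqToHom (GS.single_eq i)).op x) := by
    intro k
    rw [← Functor.map_comp_apply, ← op_comp, Category.assoc, eqToHom_trans, eqToHom_refl,
      Category.comp_id]
  rw [hx f, hx g]
  exact hC.htp_map X (.single i) hi (hfg.comp_right _) _

end Homotopy

lemma gcomp_of_composable {E : Type u} [Category.{v} E] {Φ : Coglob E} {GS : GSums Φ}
    {X : Eᵒᵖ ⥤ Type w} (hm : GS.IsModel X) (P : Pregroupoidal GS) {j k : ℕ}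
    {u v : arr (Φ := Φ) X (j + k + 1)} (hc : Composable j k u v) :
    gcomp hm P j k u v = X.map (P.nabla j k).op (pairUp hm u v hc) :=
  dif_pos hc

theorem Pi_n_independent {E : Type u} [Category.{v} E] (Φ : Coglob E) (GS : GSums Φ)
    (hC : GS.Contractible) (X : Eᵒᵖ ⥤ Type w) (hm : GS.IsModel X)
    (P : Pregroupoidal GS) (m : ℕ)
    -- another lifting `∇'_n` with the same globular source and target
    (nabla' : Φ.D (m + 1) ⟶ GS.S (GSums.Btab m 0))
    (hσ' : Φ.σ m ≫ nabla' = Φ.σ m ≫ GS.ε₂ m 0)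
    (hτ' : Φ.τ m ≫ nabla' = Φ.τ m ≫ GS.ε₁ m 0)
    -- another lifting `κ'_{n-1}` with the same globular source and target
    (kappa' : Φ.D (m + 1) ⟶ Φ.D m)
    (hκσ' : Φ.σ m ≫ kappa' = 𝟙 (Φ.D m))
    (hκτ' : Φ.τ m ≫ kappa' = 𝟙 (Φ.D m)) :
    -- the two induced compositions agree up to homotopy ...
    (∀ (u v : arr (Φ := Φ) X (m + 1)) (hc : Composable m 0 u v),
      Htp (m + 1) (gcomp hm P m 0 u v) (X.map nabla'.op (pairUp hm u v hc))) ∧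
    -- ... and so do the two induced units
    (∀ z : arr (Φ := Φ) X m,
      Htp (m + 1) (gunit P z) (X.map kappa'.op z)) := by
  refine ⟨fun u v hc => ?_, fun z => ?_⟩
  · rw [gcomp_of_composable hm P hc]
    exact hC.htp_map (n := m + 1) X (GSums.Btab m 0) (by simp [GSums.Btab, GTable.dim])
      ⟨(P.nabla_σ₀ m).trans hσ'.symm, (P.nabla_τ₀ m).trans hτ'.symm⟩ _
  · exact hC.htp_map_globe (n := m + 1) X (by omega)
      ⟨(P.kappa_σ m).trans hκσ'.symm, (P.kappa_τ m).trans hκτ'.symm⟩ z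
end

section
/- For n ≥ 2 and any object x of an ∞-groupoid G of type C, the group π_n(G, x) is abelian (by the Eckmann–Hilton argument applied to the two compositions *^n_{n-1} and *^n_{n-2} on n-arrows with all sources and targets equal to iterated units on x). -/
/-!
STATEMENT 9: For `n ≥ 2` (written `n = k + 2`) and any object `x` of an ∞-groupoid
`G` of type `C`, the group `π_n(G, x)` is abelian (Eckmann–Hilton, using the two
compositions `*^n_{n-1}` and `*^n_{n-2}` on `n`-arrows whose sources and targets are
iterated units on `x`).  Commutativity in the quotient group is expressed at the
level of representatives: the two composites are homotopic.
-/

open CategoryTheory Opposite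

universe w v u

/-!
This is the Eckmann–Hilton argument, made to work with weak units. An operation is a morphism of
`C` out of a globe; it acts on `X` by `pull`. Write `∘` for `*_{k+1}`, `*` for `*_k`, and `1` for
iterated units of `x`. Consider the operation
`pad z = z * 1_{1_{σσz}}` on `(k+2)`-arrows (`rightPad₂`). Its faces are
`u ↦ u * 1_{σu}` (`rightPad`) applied to the faces of `z`, and that operation is parallel to the
identity. So a lifting `ρ` between them gives `z ≃ c ∘ pad z ∘ c⁻¹` for every loop `z` at `1`,
with the same `c = ρ(1)` for all of them (`exists_htp_gconj_rightPad₂`). It is therefore enough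
to show `pad (α ∘ β) ≃ pad (β ∘ α)`. Three facts give this. `pad` is multiplicative. On loops,
`pad` agrees with left padding `z ↦ 1 * z`: the two are conjugate by a cell that is homotopic to
a unit. And the interchange law gives `(α * 1) ∘ (1 * β) ≃ (1 * β) ∘ (α * 1)`. Every homotopy
comes from a lifting between two parallel operations on a globular sum of dimension at most
`k + 2`.
-/

namespace Coglob

variable {E : Type u} [Category.{v} E] (Φ : Coglob E)

@[simp]
lemma σUp_one (m : ℕ) : Φ.σUp m 1 = Φ.σ m := Category.id_comp _

@[simp]
lemma τUp_one (m : ℕ) : Φ.τUp m 1 = Φ.τ m := Category.id_comp _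

lemma σUp_two (m : ℕ) : Φ.σUp m 2 = Φ.σ m ≫ Φ.σ (m + 1) :=
  congrArg (· ≫ Φ.σ (m + 1)) (Φ.σUp_one m)

lemma τUp_two (m : ℕ) : Φ.τUp m 2 = Φ.τ m ≫ Φ.τ (m + 1) :=
  congrArg (· ≫ Φ.τ (m + 1)) (Φ.τUp_one m)

@[simp]
lemma relσ_assoc {Y : E} (n : ℕ) (f : Φ.D (n + 2) ⟶ Y) :
    Φ.σ n ≫ Φ.σ (n + 1) ≫ f = Φ.σ n ≫ Φ.τ (n + 1) ≫ f := by
  rw [← Category.assoc, Φ.relσ, Category.assoc]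

@[simp]
lemma relτ_assoc {Y : E} (n : ℕ) (f : Φ.D (n + 2) ⟶ Y) :
    Φ.τ n ≫ Φ.σ (n + 1) ≫ f = Φ.τ n ≫ Φ.τ (n + 1) ≫ f := by
  rw [← Category.assoc, Φ.relτ, Category.assoc]

end Coglob

namespace GSums

attribute [reducible] Btab

variable {E : Type u} [Category.{v} E] {Φ : Coglob E} (GS : GSums Φ)

lemma dim_Btab (j k : ℕ) : (Btab j k).dim = j + k + 1 := by
  simp [GTable.dim]

lemma glue_ε (j k : ℕ) : Φ.σUp j (k + 1) ≫ GS.ε₁ j k = Φ.τUp j (k + 1) ≫ GS.ε₂ j k := by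
  simpa [ε₁, ε₂, GS.ι_single] using GS.glue (d := k) (e := k) (.single (j + k + 1))

lemma glue_ε_zero (j : ℕ) : Φ.σ j ≫ GS.ε₁ j 0 = Φ.τ j ≫ GS.ε₂ j 0 := by
  simpa using GS.glue_ε j 0

def binDesc {j k : ℕ} {Y : E} (f g : Φ.D (j + k + 1) ⟶ Y)
    (h : Φ.σUp j (k + 1) ≫ f = Φ.τUp j (k + 1) ≫ g) : GS.S (Btab j k) ⟶ Y :=
  GS.desc (.single (j + k + 1)) f (eqToHom (GS.single_eq (j + k + 1)) ≫ g)
    (by simp [GS.ι_single, h])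

variable {GS}

@[simp]
lemma ε₁_binDesc {j k : ℕ} {Y : E} (f g : Φ.D (j + k + 1) ⟶ Y) (h) :
    GS.ε₁ j k ≫ GS.binDesc f g h = f :=
  GS.ι_desc _ _ _ _

@[simp]
lemma ε₂_binDesc {j k : ℕ} {Y : E} (f g : Φ.D (j + k + 1) ⟶ Y) (h) :
    GS.ε₂ j k ≫ GS.binDesc f g h = g := by
  simp [ε₂, binDesc, GS.ρ_desc]

lemma ρ_single_eq (j k : ℕ) :
    GS.ρ (.single (j + k + 1)) = eqToHom (GS.single_eq (j + k + 1)) ≫ GS.ε₂ j k := by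
  simp [ε₂]

lemma hom_ext_Btab {j k : ℕ} {Y : E} {m m' : GS.S (Btab j k) ⟶ Y}
    (h₁ : GS.ε₁ j k ≫ m = GS.ε₁ j k ≫ m') (h₂ : GS.ε₂ j k ≫ m = GS.ε₂ j k ≫ m') : m = m' :=
  GS.hom_ext _ m m' h₁ (by rw [ρ_single_eq, Category.assoc, Category.assoc, h₂])

lemma binDesc_comp {j k : ℕ} {Y Z : E} (f g : Φ.D (j + k + 1) ⟶ Y) (h) (m : Y ⟶ Z) :
    GS.binDesc f g h ≫ m =
      GS.binDesc (f ≫ m) (g ≫ m) (by rw [← Category.assoc, h, Category.assoc]) :=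
  hom_ext_Btab (by rw [← Category.assoc, ε₁_binDesc, ε₁_binDesc])
    (by rw [← Category.assoc, ε₂_binDesc, ε₂_binDesc])

lemma amalgσ_binDesc {j k : ℕ} {Y : E} (f g : Φ.D (j + (k + 1) + 1) ⟶ Y) (h) :
    GS.amalgσ j k ≫ GS.binDesc f g h =
      GS.binDesc (Φ.σ (j + k + 1) ≫ f) (Φ.σ (j + k + 1) ≫ g) (by
        rw [← Category.assoc, ← Category.assoc, Φ.τUp_σ]; exact h) := by
  refine hom_ext_Btab ?_ ?_
  · rw [ε₁_binDesc, ← Category.assoc, ε₁, amalgσ]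
    unfold amalgMap
    rw [GS.ι_desc, Category.assoc, ε₁_binDesc]
  · rw [ε₂_binDesc, ε₂, Category.assoc, amalgσ]
    unfold amalgMap
    rw [← Category.assoc (GS.ρ _), GS.ρ_desc]
    simp

lemma amalgτ_binDesc {j k : ℕ} {Y : E} (f g : Φ.D (j + (k + 1) + 1) ⟶ Y) (h) :
    GS.amalgτ j k ≫ GS.binDesc f g h =
      GS.binDesc (Φ.τ (j + k + 1) ≫ f) (Φ.τ (j + k + 1) ≫ g) (by
        rw [← Category.assoc, ← Category.assoc, Φ.σUp_τ]; exact h) := by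
  refine hom_ext_Btab ?_ ?_
  · rw [ε₁_binDesc, ← Category.assoc, ε₁, amalgτ]
    unfold amalgMap
    rw [GS.ι_desc, Category.assoc, ε₁_binDesc]
  · rw [ε₂_binDesc, ε₂, Category.assoc, amalgτ]
    unfold amalgMap
    rw [← Category.assoc (GS.ρ _), GS.ρ_desc]
    simp

namespace Contractible

lemma exists_globe_lift (hC : GS.Contractible) {m i : ℕ} (hi : i ≤ m + 2)
    (f g : Φ.D (m + 1) ⟶ Φ.D i)
    (hσ : Φ.σ m ≫ f = Φ.σ m ≫ g) (hτ : Φ.τ m ≫ f = Φ.τ m ≫ g) :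
    ∃ H : Φ.D (m + 2) ⟶ Φ.D i, Φ.σ (m + 1) ≫ H = f ∧ Φ.τ (m + 1) ≫ H = g := by
  obtain ⟨H, hHσ, hHτ⟩ := hC (m + 1) (.single i) (by simpa [GTable.dim] using hi)
    (f ≫ GS.ι _) (g ≫ GS.ι _)
    ⟨by rw [← Category.assoc, hσ, Category.assoc], by rw [← Category.assoc, hτ, Category.assoc]⟩
  refine ⟨H ≫ eqToHom (GS.single_eq i), ?_, ?_⟩
  · rw [← Category.assoc, hHσ, Category.assoc, GS.ι_single, eqToHom_trans, eqToHom_refl,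
      Category.comp_id]
  · rw [← Category.assoc, hHτ, Category.assoc, GS.ι_single, eqToHom_trans, eqToHom_refl,
      Category.comp_id]

end Contractible

end GSums

namespace Pregroupoidal

variable {E : Type u} [Category.{v} E] {Φ : Coglob E} {GS : GSums Φ} (P : Pregroupoidal GS)

@[simp]
lemma kappa_σ_assoc {n : ℕ} {Y : E} (f : Φ.D n ⟶ Y) : Φ.σ n ≫ P.kappa n ≫ f = f := by
  rw [← Category.assoc, P.kappa_σ, Category.id_comp]

@[simp]
lemma kappa_τ_assoc {n : ℕ} {Y : E} (f : Φ.D n ⟶ Y) : Φ.τ n ≫ P.kappa n ≫ f = f := by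
  rw [← Category.assoc, P.kappa_τ, Category.id_comp]

def compOp {j k : ℕ} {Y : E} (f g : Φ.D (j + k + 1) ⟶ Y)
    (h : Φ.σUp j (k + 1) ≫ f = Φ.τUp j (k + 1) ≫ g) : Φ.D (j + k + 1) ⟶ Y :=
  P.nabla j k ≫ GS.binDesc f g h

lemma σ_compOp_zero {j : ℕ} {Y : E} (f g : Φ.D (j + 0 + 1) ⟶ Y) (h) :
    Φ.σ j ≫ P.compOp f g h = Φ.σ j ≫ g := by
  rw [compOp, ← Category.assoc, P.nabla_σ₀, Category.assoc, GSums.ε₂_binDesc]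

lemma τ_compOp_zero {j : ℕ} {Y : E} (f g : Φ.D (j + 0 + 1) ⟶ Y) (h) :
    Φ.τ j ≫ P.compOp f g h = Φ.τ j ≫ f := by
  rw [compOp, ← Category.assoc, P.nabla_τ₀, Category.assoc, GSums.ε₁_binDesc]

lemma σ_compOp_succ {j k : ℕ} {Y : E} (f g : Φ.D (j + (k + 1) + 1) ⟶ Y) (h) :
    Φ.σ (j + (k + 1)) ≫ P.compOp (k := k + 1) f g h =
      P.compOp (Φ.σ (j + (k + 1)) ≫ f) (Φ.σ (j + (k + 1)) ≫ g) (by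
        rw [← Category.assoc, ← Category.assoc]
        change Φ.σUp j (k + 2) ≫ f = (Φ.τUp j (k + 1) ≫ Φ.σ (j + k + 1)) ≫ g
        rw [Φ.τUp_σ]; exact h) := by
  change Φ.σ (j + k + 1) ≫ _ = _
  rw [compOp, ← Category.assoc, P.nabla_σ, Category.assoc, GSums.amalgσ_binDesc]; rfl

lemma τ_compOp_succ {j k : ℕ} {Y : E} (f g : Φ.D (j + (k + 1) + 1) ⟶ Y) (h) :
    Φ.τ (j + (k + 1)) ≫ P.compOp (k := k + 1) f g h =
      P.compOp (Φ.τ (j + (k + 1)) ≫ f) (Φ.τ (j + (k + 1)) ≫ g) (by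
        rw [← Category.assoc, ← Category.assoc]
        change (Φ.σUp j (k + 1) ≫ Φ.τ (j + k + 1)) ≫ f = Φ.τUp j (k + 2) ≫ g
        rw [Φ.σUp_τ]; exact h) := by
  change Φ.τ (j + k + 1) ≫ _ = _
  rw [compOp, ← Category.assoc, P.nabla_τ, Category.assoc, GSums.amalgτ_binDesc]; rfl

lemma compOp_comp {j k : ℕ} {Y Z : E} (f g : Φ.D (j + k + 1) ⟶ Y) (h) (m : Y ⟶ Z) :
    P.compOp f g h ≫ m =
      P.compOp (f ≫ m) (g ≫ m) (by rw [← Category.assoc, h, Category.assoc]) := by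
  rw [compOp, Category.assoc, GSums.binDesc_comp]; rfl

lemma compOp_congr {j k : ℕ} {Y : E} {f f' g g' : Φ.D (j + k + 1) ⟶ Y} (h h')
    (hf : f = f') (hg : g = g') : P.compOp f g h = P.compOp f' g' h' := by
  subst hf hg; rfl

def vcompOp {j : ℕ} {Y : E} (f g : Φ.D (j + 1) ⟶ Y) (h : Φ.σ j ≫ f = Φ.τ j ≫ g) :
    Φ.D (j + 1) ⟶ Y :=
  P.compOp (k := 0) f g (by simpa using h)

lemma σ_vcompOp {j : ℕ} {Y : E} (f g : Φ.D (j + 1) ⟶ Y) (h) :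
    Φ.σ j ≫ P.vcompOp f g h = Φ.σ j ≫ g :=
  P.σ_compOp_zero f g _

lemma τ_vcompOp {j : ℕ} {Y : E} (f g : Φ.D (j + 1) ⟶ Y) (h) :
    Φ.τ j ≫ P.vcompOp f g h = Φ.τ j ≫ f :=
  P.τ_compOp_zero f g _

def rightPad (j : ℕ) : Φ.D (j + 1) ⟶ Φ.D (j + 1) :=
  P.vcompOp (𝟙 _) (P.kappa j ≫ Φ.σ j) (by simp)

def leftPad (j : ℕ) : Φ.D (j + 1) ⟶ Φ.D (j + 1) :=
  P.vcompOp (P.kappa j ≫ Φ.τ j) (𝟙 _) (by simp)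

lemma σ_rightPad (j : ℕ) : Φ.σ j ≫ P.rightPad j = Φ.σ j := by
  rw [rightPad, σ_vcompOp, kappa_σ_assoc]

lemma τ_rightPad (j : ℕ) : Φ.τ j ≫ P.rightPad j = Φ.τ j := by
  rw [rightPad, τ_vcompOp, Category.comp_id]

lemma σ_leftPad (j : ℕ) : Φ.σ j ≫ P.leftPad j = Φ.σ j := by
  rw [leftPad, σ_vcompOp, Category.comp_id]

lemma τ_leftPad (j : ℕ) : Φ.τ j ≫ P.leftPad j = Φ.τ j := by
  rw [leftPad, τ_vcompOp, kappa_τ_assoc]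

lemma rightPad_kDown (j : ℕ) : P.rightPad j ≫ kDown P (j + 1) = P.leftPad j ≫ kDown P (j + 1) := by
  simp only [rightPad, leftPad, vcompOp, compOp_comp]
  exact P.compOp_congr _ _ (by simp [kDown]) (by simp [kDown])

/-- The operation `z ↦ z *_j 1_{1_{σσ z}}` on `(j+2)`-arrows. -/
def rightPad₂ (j : ℕ) : Φ.D (j + 2) ⟶ Φ.D (j + 2) :=
  P.compOp (j := j) (k := 1) (𝟙 _) (P.kappa (j + 1) ≫ P.kappa j ≫ Φ.σUp j 2)
    (by simp [Coglob.τUp_two])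

/-- The operation `z ↦ 1_{1_{ττ z}} *_j z` on `(j+2)`-arrows. -/
def leftPad₂ (j : ℕ) : Φ.D (j + 2) ⟶ Φ.D (j + 2) :=
  P.compOp (j := j) (k := 1) (P.kappa (j + 1) ≫ P.kappa j ≫ Φ.τUp j 2) (𝟙 _)
    (by simp [Coglob.σUp_two])

lemma σ_rightPad₂ (j : ℕ) : Φ.σ (j + 1) ≫ P.rightPad₂ j = P.rightPad j ≫ Φ.σ (j + 1) := by
  rw [rightPad₂, σ_compOp_succ, rightPad, vcompOp, compOp_comp]
  exact P.compOp_congr _ _ (by simp) (by simp [Coglob.σUp_two])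

lemma τ_rightPad₂ (j : ℕ) : Φ.τ (j + 1) ≫ P.rightPad₂ j = P.rightPad j ≫ Φ.τ (j + 1) := by
  rw [rightPad₂, τ_compOp_succ, rightPad, vcompOp, compOp_comp]
  exact P.compOp_congr _ _ (by simp) (by simp [Coglob.σUp_two, Φ.relσ])

lemma σ_leftPad₂ (j : ℕ) : Φ.σ (j + 1) ≫ P.leftPad₂ j = P.leftPad j ≫ Φ.σ (j + 1) := by
  rw [leftPad₂, σ_compOp_succ, leftPad, vcompOp, compOp_comp]
  exact P.compOp_congr _ _ (by simp [Coglob.τUp_two, Φ.relτ]) (by simp)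

lemma τ_leftPad₂ (j : ℕ) : Φ.τ (j + 1) ≫ P.leftPad₂ j = P.leftPad j ≫ Φ.τ (j + 1) := by
  rw [leftPad₂, τ_compOp_succ, leftPad, vcompOp, compOp_comp]
  exact P.compOp_congr _ _ (by simp [Coglob.τUp_two]) (by simp)

end Pregroupoidal

section Elements

attribute [reducible] arr

variable {E : Type u} [Category.{v} E] {Φ : Coglob E} {GS : GSums Φ} {X : Eᵒᵖ ⥤ Type w}

def pull {A B : E} (f : A ⟶ B) (ξ : X.obj (op B)) : X.obj (op A) := X.map f.op ξ

lemma pull_comp {A B C : E} (f : A ⟶ B) (g : B ⟶ C) (ξ : X.obj (op C)) :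
    pull (f ≫ g) ξ = pull f (pull g ξ) := by
  simp [pull]

@[simp]
lemma pull_id {A : E} (ξ : X.obj (op A)) : pull (𝟙 A) ξ = ξ := by
  simp [pull]

lemma asrc_eq_pull {n : ℕ} (z : arr (Φ := Φ) X (n + 1)) : asrc z = pull (Φ.σ n) z := rfl

lemma atgt_eq_pull {n : ℕ} (z : arr (Φ := Φ) X (n + 1)) : atgt z = pull (Φ.τ n) z := rfl

lemma gunit_eq_pull (P : Pregroupoidal GS) {n : ℕ} (z : arr (Φ := Φ) X n) :
    gunit P z = pull (P.kappa n) z := rfl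

lemma gwinv_eq_pull (P : Pregroupoidal GS) (j k : ℕ) (z : arr (Φ := Φ) X (j + k + 1)) :
    gwinv P j k z = pull (P.winv j k) z := rfl

lemma unitIter_eq_pull (P : Pregroupoidal GS) (n : ℕ) (x : arr (Φ := Φ) X 0) :
    unitIter P n x = pull (kDown P n) x := rfl

lemma composable_pull {j k : ℕ} {Y : E} (f g : Φ.D (j + k + 1) ⟶ Y)
    (h : Φ.σUp j (k + 1) ≫ f = Φ.τUp j (k + 1) ≫ g) (ξ : X.obj (op Y)) :
    Composable j k (pull (X := X) f ξ) (pull g ξ) := by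
  change pull (Φ.σUp j (k + 1)) (pull f ξ) = pull (Φ.τUp j (k + 1)) (pull g ξ)
  rw [← pull_comp, ← pull_comp, h]

lemma composable_zero_iff {j : ℕ} {a b : arr (Φ := Φ) X (j + 0 + 1)} :
    Composable j 0 a b ↔ asrc a = atgt b := by
  change pull (Φ.σUp j 1) a = pull (Φ.τUp j 1) b ↔ _
  rw [Φ.σUp_one, Φ.τUp_one]; rfl

lemma Composable.map_eq {j k : ℕ} {u v : arr (Φ := Φ) X (j + k + 1)} (hc : Composable j k u v) :
    X.map (Φ.σUp j (k + 1)).op u =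
      X.map (Φ.τUp j (k + 1) ≫ GS.ι (.single (j + k + 1))).op
        (X.map (eqToHom (GS.single_eq (j + k + 1))).op v) := by
  change pull (Φ.σUp j (k + 1)) u =
    pull (Φ.τUp j (k + 1) ≫ GS.ι (.single (j + k + 1))) (pull (eqToHom _) v)
  rw [← pull_comp, Category.assoc, GS.ι_single, eqToHom_trans, eqToHom_refl, Category.comp_id]
  exact hc

variable (hm : GS.IsModel X)

lemma pull_ε₁_pairUp {j k : ℕ} (u v : arr (Φ := Φ) X (j + k + 1)) (hc : Composable j k u v) :
    pull (GS.ε₁ j k) (pairUp hm u v hc) = u :=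
  (hm _ u _ hc.map_eq).exists.choose_spec.1

lemma pull_ρ_pairUp {j k : ℕ} (u v : arr (Φ := Φ) X (j + k + 1)) (hc : Composable j k u v) :
    pull (GS.ρ (.single (j + k + 1))) (pairUp hm u v hc) =
      pull (eqToHom (GS.single_eq (j + k + 1))) v :=
  (hm _ u _ hc.map_eq).exists.choose_spec.2

lemma pull_ε₂_pairUp {j k : ℕ} (u v : arr (Φ := Φ) X (j + k + 1)) (hc : Composable j k u v) :
    pull (GS.ε₂ j k) (pairUp hm u v hc) = v := by
  rw [GSums.ε₂, pull_comp, pull_ρ_pairUp, ← pull_comp, eqToHom_trans, eqToHom_refl, pull_id]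

lemma eq_pairUp {j k : ℕ} {u v : arr (Φ := Φ) X (j + k + 1)} (hc : Composable j k u v)
    (ζ : X.obj (op (GS.S (GSums.Btab j k))))
    (h₁ : pull (GS.ε₁ j k) ζ = u) (h₂ : pull (GS.ε₂ j k) ζ = v) : ζ = pairUp hm u v hc := by
  refine (hm _ u _ hc.map_eq).unique ⟨h₁, ?_⟩ (hm _ u _ hc.map_eq).exists.choose_spec
  change pull (GS.ρ _) ζ = pull (eqToHom _) v
  rw [GS.ρ_single_eq, pull_comp, h₂]

lemma pull_binDesc {j k : ℕ} {Y : E} (f g : Φ.D (j + k + 1) ⟶ Y) (h) (ξ : X.obj (op Y)) :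
    pull (GS.binDesc f g h) ξ = pairUp hm (pull f ξ) (pull g ξ) (composable_pull f g h ξ) :=
  eq_pairUp hm _ _ (by rw [← pull_comp, GSums.ε₁_binDesc]) (by rw [← pull_comp, GSums.ε₂_binDesc])

variable (P : Pregroupoidal GS)

lemma gcomp_eq_pull {j k : ℕ} {u v : arr (Φ := Φ) X (j + k + 1)}
    (hc : Composable j k u v) : gcomp hm P j k u v = pull (P.nabla j k) (pairUp hm u v hc) :=
  dif_pos hc

lemma pull_compOp {j k : ℕ} {Y : E} (f g : Φ.D (j + k + 1) ⟶ Y) (h) (ξ : X.obj (op Y)) :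
    pull (P.compOp f g h) ξ = gcomp hm P j k (pull f ξ) (pull g ξ) := by
  rw [Pregroupoidal.compOp, pull_comp, pull_binDesc hm, gcomp_eq_pull hm P]

lemma pull_vcompOp {j : ℕ} {Y : E} (f g : Φ.D (j + 1) ⟶ Y) (h) (ξ : X.obj (op Y)) :
    pull (P.vcompOp f g h) ξ = gcomp hm P j 0 (pull f ξ) (pull g ξ) :=
  pull_compOp (k := 0) hm P f g _ ξ

lemma pull_compOp_ε_pairUp {j k : ℕ} {u v : arr (Φ := Φ) X (j + k + 1)} (hc : Composable j k u v) :
    pull (P.compOp (GS.ε₁ j k) (GS.ε₂ j k) (GS.glue_ε j k)) (pairUp hm u v hc) =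
      gcomp hm P j k u v := by
  rw [pull_compOp, pull_ε₁_pairUp, pull_ε₂_pairUp]

@[simp]
lemma asrc_gunit {n : ℕ} (z : arr (Φ := Φ) X n) : asrc (gunit P z) = z := by
  rw [asrc_eq_pull, gunit_eq_pull, ← pull_comp, P.kappa_σ, pull_id]

@[simp]
lemma atgt_gunit {n : ℕ} (z : arr (Φ := Φ) X n) : atgt (gunit P z) = z := by
  rw [atgt_eq_pull, gunit_eq_pull, ← pull_comp, P.kappa_τ, pull_id]

@[simp]
lemma asrc_gwinv {j : ℕ} (z : arr (Φ := Φ) X (j + 0 + 1)) : asrc (gwinv P j 0 z) = atgt z := by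
  rw [asrc_eq_pull, gwinv_eq_pull, ← pull_comp, P.winv_σ₀, ← atgt_eq_pull]

@[simp]
lemma atgt_gwinv {j : ℕ} (z : arr (Φ := Φ) X (j + 0 + 1)) : atgt (gwinv P j 0 z) = asrc z := by
  rw [atgt_eq_pull, gwinv_eq_pull, ← pull_comp, P.winv_τ₀, ← asrc_eq_pull]

lemma asrc_gcomp {j : ℕ} {a b : arr (Φ := Φ) X (j + 0 + 1)} (h : asrc a = atgt b) :
    asrc (gcomp hm P j 0 a b) = asrc b := by
  rw [← pull_compOp_ε_pairUp hm P (composable_zero_iff.2 h), asrc_eq_pull, ← pull_comp,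
    P.σ_compOp_zero, pull_comp, pull_ε₂_pairUp, asrc_eq_pull]

lemma atgt_gcomp {j : ℕ} {a b : arr (Φ := Φ) X (j + 0 + 1)} (h : asrc a = atgt b) :
    atgt (gcomp hm P j 0 a b) = atgt a := by
  rw [← pull_compOp_ε_pairUp hm P (composable_zero_iff.2 h), atgt_eq_pull, ← pull_comp,
    P.τ_compOp_zero, pull_comp, pull_ε₁_pairUp, atgt_eq_pull]

lemma asrc_gcomp_succ {j k : ℕ} {a b : arr (Φ := Φ) X (j + (k + 1) + 1)}
    (hc : Composable j (k + 1) a b) :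
    asrc (gcomp hm P j (k + 1) a b) = gcomp hm P j k (asrc a) (asrc b) := by
  rw [← pull_compOp_ε_pairUp hm P hc, asrc_eq_pull, ← pull_comp, P.σ_compOp_succ, pull_compOp,
    pull_comp, pull_comp, pull_ε₁_pairUp, pull_ε₂_pairUp]; rfl

lemma atgt_gcomp_succ {j k : ℕ} {a b : arr (Φ := Φ) X (j + (k + 1) + 1)}
    (hc : Composable j (k + 1) a b) :
    atgt (gcomp hm P j (k + 1) a b) = gcomp hm P j k (atgt a) (atgt b) := by
  rw [← pull_compOp_ε_pairUp hm P hc, atgt_eq_pull, ← pull_comp, P.τ_compOp_succ, pull_compOp,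
    pull_comp, pull_comp, pull_ε₁_pairUp, pull_ε₂_pairUp]; rfl

lemma pull_rightPad {j : ℕ} (u : arr (Φ := Φ) X (j + 1)) :
    pull (P.rightPad j) u = gcomp hm P j 0 u (gunit P (asrc u)) := by
  rw [Pregroupoidal.rightPad, pull_vcompOp, pull_id, pull_comp]; rfl

lemma pull_leftPad {j : ℕ} (u : arr (Φ := Φ) X (j + 1)) :
    pull (P.leftPad j) u = gcomp hm P j 0 (gunit P (atgt u)) u := by
  rw [Pregroupoidal.leftPad, pull_vcompOp, pull_id, pull_comp]; rfl

lemma pull_rightPad₂ {j : ℕ} (z : arr (Φ := Φ) X (j + 2)) :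
    pull (P.rightPad₂ j) z = gcomp hm P j 1 z (gunit P (gunit P (pull (Φ.σUp j 2) z))) := by
  rw [Pregroupoidal.rightPad₂, pull_compOp, pull_id, pull_comp, pull_comp]; rfl

lemma pull_leftPad₂ {j : ℕ} (z : arr (Φ := Φ) X (j + 2)) :
    pull (P.leftPad₂ j) z = gcomp hm P j 1 (gunit P (gunit P (pull (Φ.τUp j 2) z))) z := by
  rw [Pregroupoidal.leftPad₂, pull_compOp, pull_id, pull_comp, pull_comp]; rfl

lemma asrc_pull_rightPad₂ {j : ℕ} (z : arr (Φ := Φ) X (j + 2)) :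
    asrc (pull (P.rightPad₂ j) z) = pull (P.rightPad j) (asrc z) := by
  rw [asrc_eq_pull, ← pull_comp, P.σ_rightPad₂, pull_comp]; rfl

lemma atgt_pull_rightPad₂ {j : ℕ} (z : arr (Φ := Φ) X (j + 2)) :
    atgt (pull (P.rightPad₂ j) z) = pull (P.rightPad j) (atgt z) := by
  rw [atgt_eq_pull, ← pull_comp, P.τ_rightPad₂, pull_comp]; rfl

lemma asrc_pull_leftPad₂ {j : ℕ} (z : arr (Φ := Φ) X (j + 2)) :
    asrc (pull (P.leftPad₂ j) z) = pull (P.leftPad j) (asrc z) := by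
  rw [asrc_eq_pull, ← pull_comp, P.σ_leftPad₂, pull_comp]; rfl

end Elements

section Homotopy

variable {E : Type u} [Category.{v} E] {Φ : Coglob E} {GS : GSums Φ} {X : Eᵒᵖ ⥤ Type w}

lemma htp_pull_of_par (hC : GS.Contractible) {m i : ℕ} {T : GTable i} (hT : T.dim ≤ m + 2)
    {f g : Φ.D (m + 1) ⟶ GS.S T} (hσ : Φ.σ m ≫ f = Φ.σ m ≫ g) (hτ : Φ.τ m ≫ f = Φ.τ m ≫ g)
    (ξ : X.obj (op (GS.S T))) : Htp (m + 1) (pull f ξ) (pull g ξ) := by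
  obtain ⟨H, hHσ, hHτ⟩ := hC (m + 1) T hT f g ⟨hσ, hτ⟩
  exact ⟨pull H ξ, by rw [asrc_eq_pull, ← pull_comp, hHσ], by rw [atgt_eq_pull, ← pull_comp, hHτ]⟩

lemma htp_pull_of_par_globe (hC : GS.Contractible) {m i : ℕ} (hi : i ≤ m + 2)
    {f g : Φ.D (m + 1) ⟶ Φ.D i} (hσ : Φ.σ m ≫ f = Φ.σ m ≫ g) (hτ : Φ.τ m ≫ f = Φ.τ m ≫ g)
    (z : arr (Φ := Φ) X i) : Htp (m + 1) (pull f z) (pull g z) := by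
  obtain ⟨H, hHσ, hHτ⟩ := hC.exists_globe_lift hi f g hσ hτ
  exact ⟨pull H z, by rw [asrc_eq_pull, ← pull_comp, hHσ], by rw [atgt_eq_pull, ← pull_comp, hHτ]⟩

lemma htp_refl (P : Pregroupoidal GS) {n : ℕ} (z : arr (Φ := Φ) X n) : Htp n z z :=
  ⟨gunit P z, asrc_gunit P z, atgt_gunit P z⟩

lemma htp_symm (P : Pregroupoidal GS) {n : ℕ} {z z' : arr (Φ := Φ) X n} (e : Htp n z z') :
    Htp n z' z := by
  obtain ⟨h, rfl, rfl⟩ := e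
  exact ⟨gwinv P n 0 h, asrc_gwinv P h, atgt_gwinv P h⟩

lemma htp_trans (hm : GS.IsModel X) (P : Pregroupoidal GS) {n : ℕ} {u v w : arr (Φ := Φ) X n}
    (e₁ : Htp n u v) (e₂ : Htp n v w) : Htp n u w := by
  obtain ⟨a, rfl, rfl⟩ := e₁
  obtain ⟨b, hb, rfl⟩ := e₂
  exact ⟨gcomp hm P n 0 b a, asrc_gcomp hm P hb, atgt_gcomp hm P hb⟩

lemma asrc_eq_of_htp {n : ℕ} {z z' : arr (Φ := Φ) X (n + 1)} (e : Htp (n + 1) z z') :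
    asrc z = asrc z' := by
  obtain ⟨h, rfl, rfl⟩ := e
  simp only [asrc_eq_pull, atgt_eq_pull, ← pull_comp, Φ.relσ]

lemma atgt_eq_of_htp {n : ℕ} {z z' : arr (Φ := Φ) X (n + 1)} (e : Htp (n + 1) z z') :
    atgt z = atgt z' := by
  obtain ⟨h, rfl, rfl⟩ := e
  simp only [asrc_eq_pull, atgt_eq_pull, ← pull_comp, Φ.relτ]

lemma htp_gcomp (hm : GS.IsModel X) (P : Pregroupoidal GS) {j : ℕ}
    {a a' b b' : arr (Φ := Φ) X (j + 0 + 1)}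
    (ea : Htp (j + 1) a a') (eb : Htp (j + 1) b b') (h : asrc a = atgt b) :
    Htp (j + 1) (gcomp hm P j 0 a b) (gcomp hm P j 0 a' b') := by
  obtain ⟨H₁, h₁σ, h₁τ⟩ := ea
  obtain ⟨H₂, h₂σ, h₂τ⟩ := eb
  have hc : Composable j 1 H₁ H₂ := by
    change pull (Φ.σUp j 2) H₁ = pull (Φ.τUp j 2) H₂
    rw [Φ.σUp_two, Φ.τUp_two, pull_comp, pull_comp]
    change asrc (asrc H₁) = atgt (atgt H₂)
    rw [h₁σ, h₂τ, h, atgt_eq_of_htp ⟨H₂, h₂σ, h₂τ⟩]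
  refine ⟨gcomp hm P j 1 H₁ H₂, ?_, ?_⟩
  · rw [asrc_gcomp_succ hm P hc, h₁σ, h₂σ]
  · rw [atgt_gcomp_succ hm P hc, h₁τ, h₂τ]

lemma htp_gwinv (P : Pregroupoidal GS) {j : ℕ} {z z' : arr (Φ := Φ) X (j + 0 + 1)}
    (e : Htp (j + 1) z z') :
    Htp (j + 1) (gwinv P j 0 z) (gwinv P j 0 z') := by
  obtain ⟨h, rfl, rfl⟩ := e
  refine ⟨pull (P.winv j 1) h, ?_, ?_⟩
  · rw [asrc_eq_pull, ← pull_comp, P.winv_σ j 0, pull_comp]; rfl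
  · rw [atgt_eq_pull, ← pull_comp, P.winv_τ j 0, pull_comp]; rfl

lemma htp_gcomp_gunit_right (hm : GS.IsModel X) (P : Pregroupoidal GS) (hC : GS.Contractible)
    {j : ℕ} (z : arr (Φ := Φ) X (j + 1)) :
    Htp (j + 1) (gcomp hm P j 0 z (gunit P (asrc z))) z := by
  rw [← pull_rightPad hm P]
  simpa using htp_pull_of_par_globe hC (Nat.le_succ _)
    (f := P.rightPad j) (g := 𝟙 _) (by simp [P.σ_rightPad]) (by simp [P.τ_rightPad]) z

lemma htp_gcomp_gunit_left (hm : GS.IsModel X) (P : Pregroupoidal GS) (hC : GS.Contractible)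
    {j : ℕ} (z : arr (Φ := Φ) X (j + 1)) :
    Htp (j + 1) (gcomp hm P j 0 (gunit P (atgt z)) z) z := by
  rw [← pull_leftPad hm P]
  simpa using htp_pull_of_par_globe hC (Nat.le_succ _)
    (f := P.leftPad j) (g := 𝟙 _) (by simp [P.σ_leftPad]) (by simp [P.τ_leftPad]) z

lemma htp_gwinv_gunit (P : Pregroupoidal GS) (hC : GS.Contractible) {n : ℕ} (u : arr (Φ := Φ) X n) :
    Htp (n + 1) (gwinv P n 0 (gunit P u)) (gunit P u) := by
  rw [gwinv_eq_pull, gunit_eq_pull, ← pull_comp]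
  exact htp_pull_of_par_globe hC (by omega) (f := P.winv n 0 ≫ P.kappa n) (g := P.kappa n)
    (by rw [← Category.assoc, P.winv_σ₀, P.kappa_τ, P.kappa_σ])
    (by rw [← Category.assoc, P.winv_τ₀, P.kappa_τ, P.kappa_σ]) u

end Homotopy

section EckmannHilton

variable {E : Type u} [Category.{v} E] {Φ : Coglob E} {GS : GSums Φ} {X : Eᵒᵖ ⥤ Type w}
variable (hm : GS.IsModel X) (P : Pregroupoidal GS)

noncomputable def gconj {j : ℕ} (h y : arr (Φ := Φ) X (j + 1)) : arr (Φ := Φ) X (j + 1) :=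
  gcomp hm P j 0 (gcomp hm P j 0 h y) (gwinv P j 0 h)

lemma htp_gconj {j : ℕ} {h y y' : arr (Φ := Φ) X (j + 1)} (e : Htp (j + 1) y y')
    (hy₁ : asrc y = asrc h) (hy₂ : atgt y = asrc h) :
    Htp (j + 1) (gconj hm P h y) (gconj hm P h y') :=
  htp_gcomp hm P (htp_gcomp hm P (htp_refl P h) e hy₂.symm) (htp_refl P _)
    (by rw [asrc_gcomp hm P hy₂.symm, hy₁, atgt_gwinv])

lemma htp_gconj_of_htp_gunit (hC : GS.Contractible) {j : ℕ} {h y : arr (Φ := Φ) X (j + 1)}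
    (eh : Htp (j + 1) h (gunit P (asrc y))) (hy : atgt y = asrc y) :
    Htp (j + 1) (gconj hm P h y) y := by
  have hh : asrc h = asrc y := (asrc_eq_of_htp eh).trans (asrc_gunit P _)
  have e₁ : Htp (j + 1) (gcomp hm P j 0 h y) y :=
    htp_trans hm P (htp_gcomp hm P eh (htp_refl P y) (hh.trans hy.symm))
      (hy ▸ htp_gcomp_gunit_left hm P hC y)
  have e₂ : Htp (j + 1) (gwinv P j 0 h) (gunit P (asrc y)) :=
    htp_trans hm P (htp_gwinv P eh) (htp_gwinv_gunit P hC _)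
  exact htp_trans hm P
    (htp_gcomp hm P e₁ e₂ (by rw [asrc_gcomp hm P (hh.trans hy.symm), atgt_gwinv, hh]))
    (htp_gcomp_gunit_right hm P hC y)

/-- Naturality of a cell `H : A ⇒ B` of operations: conjugating by `H` turns `F`, whose faces
are those of `A`, into `G`, whose faces are those of `B`. -/
lemma htp_conj_of_cell (hC : GS.Contractible) {m : ℕ} {H : Φ.D (m + 1) ⟶ Φ.D m}
    {A B : Φ.D m ⟶ Φ.D m} {F G : Φ.D (m + 1) ⟶ Φ.D (m + 1)}
    (hHσ : Φ.σ m ≫ H = A) (hHτ : Φ.τ m ≫ H = B)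
    (hFσ : Φ.σ m ≫ F = A ≫ Φ.σ m) (hFτ : Φ.τ m ≫ F = A ≫ Φ.τ m)
    (hGσ : Φ.σ m ≫ G = B ≫ Φ.σ m) (hGτ : Φ.τ m ≫ G = B ≫ Φ.τ m) (z : arr (Φ := Φ) X (m + 1)) :
    Htp (m + 1)
      (gcomp hm P m 0 (gcomp hm P m 0 (pull H (atgt z)) (pull F z)) (gwinv P m 0 (pull H (asrc z))))
      (pull G z) := by
  have gl₁ : Φ.σ m ≫ H ≫ Φ.τ m = Φ.τ m ≫ F := by rw [← Category.assoc, hHσ, hFτ]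
  have gl₂ : Φ.σ m ≫ P.vcompOp (H ≫ Φ.τ m) F gl₁ = Φ.τ m ≫ P.winv m 0 ≫ H ≫ Φ.σ m := by
    rw [P.σ_vcompOp, hFσ, ← Category.assoc, P.winv_τ₀, ← Category.assoc, hHσ]
  have h := htp_pull_of_par_globe hC (Nat.le_succ _)
    (f := P.vcompOp (P.vcompOp (H ≫ Φ.τ m) F gl₁) (P.winv m 0 ≫ H ≫ Φ.σ m) gl₂) (g := G)
    (by rw [P.σ_vcompOp, ← Category.assoc, P.winv_σ₀, ← Category.assoc, hHτ, hGσ])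
    (by rw [P.τ_vcompOp, P.τ_vcompOp, ← Category.assoc, hHτ, hGτ]) z
  rwa [pull_vcompOp hm, pull_vcompOp hm, pull_comp, pull_comp, pull_comp] at h

/-- The faces of `rightPad₂` factor through `rightPad`, so two copies of `rightPad₂` are
composable as operations; both sides are then parallel operations on the pair `(a, b)`. -/
lemma htp_pull_rightPad₂_gcomp (hC : GS.Contractible) {j : ℕ} {a b : arr (Φ := Φ) X (j + 2)}
    (h : asrc a = atgt b) :
    Htp (j + 2) (pull (P.rightPad₂ j) (gcomp hm P (j + 1) 0 a b))
      (gcomp hm P (j + 1) 0 (pull (P.rightPad₂ j) a) (pull (P.rightPad₂ j) b)) := by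
  have hc : Composable (j + 1) 0 a b := composable_zero_iff.2 h
  have gl : Φ.σ (j + 1) ≫ P.rightPad₂ j ≫ GS.ε₁ (j + 1) 0 =
      Φ.τ (j + 1) ≫ P.rightPad₂ j ≫ GS.ε₂ (j + 1) 0 := by
    rw [← Category.assoc, ← Category.assoc, P.σ_rightPad₂, P.τ_rightPad₂, Category.assoc,
      Category.assoc, GS.glue_ε_zero]
  have e := htp_pull_of_par hC (by rw [GSums.dim_Btab]; omega)
    (f := P.rightPad₂ j ≫ P.nabla (j + 1) 0)
    (g := P.vcompOp (P.rightPad₂ j ≫ GS.ε₁ (j + 1) 0) (P.rightPad₂ j ≫ GS.ε₂ (j + 1) 0) gl)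
    (by rw [P.σ_vcompOp, ← Category.assoc, ← Category.assoc, P.σ_rightPad₂, Category.assoc,
      Category.assoc, P.nabla_σ₀])
    (by rw [P.τ_vcompOp, ← Category.assoc, ← Category.assoc, P.τ_rightPad₂, Category.assoc,
      Category.assoc, P.nabla_τ₀])
    (pairUp hm a b hc)
  rwa [pull_vcompOp hm, pull_comp, pull_comp, pull_comp, pull_ε₁_pairUp, pull_ε₂_pairUp,
    ← gcomp_eq_pull hm P hc] at e

/-- Both sides are parallel operations on the pair `(a, b)` glued along dimension `k`. -/
lemma htp_interchange (hC : GS.Contractible) {k : ℕ} {a b : arr (Φ := Φ) X (k + 2)}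
    (hc : Composable k 1 a b) :
    Htp (k + 2)
      (gcomp hm P (k + 1) 0 (gcomp hm P k 1 a (gunit P (atgt b)))
        (gcomp hm P k 1 (gunit P (asrc a)) b))
      (gcomp hm P (k + 1) 0 (gcomp hm P k 1 (gunit P (atgt a)) b)
        (gcomp hm P k 1 a (gunit P (asrc b)))) := by
  have glue : Φ.σ k ≫ Φ.τ (k + 1) ≫ GS.ε₁ k 1 = Φ.τ k ≫ Φ.τ (k + 1) ≫ GS.ε₂ k 1 := by
    simpa [Coglob.σUp_two, Coglob.τUp_two] using GS.glue_ε k 1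
  let e₁ := GS.ε₁ k 1
  let e₂ := GS.ε₂ k 1
  let κ := P.kappa (k + 1)
  let p₁ := P.compOp (j := k) (k := 1) e₁ (κ ≫ Φ.τ (k + 1) ≫ e₂)
    (by simp [e₁, e₂, κ, Coglob.σUp_two, Coglob.τUp_two, glue])
  let p₂ := P.compOp (j := k) (k := 1) (κ ≫ Φ.σ (k + 1) ≫ e₁) e₂
    (by simp [e₁, e₂, κ, Coglob.σUp_two, Coglob.τUp_two, glue])
  let r₁ := P.compOp (j := k) (k := 1) (κ ≫ Φ.τ (k + 1) ≫ e₁) e₂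
    (by simp [e₁, e₂, κ, Coglob.σUp_two, Coglob.τUp_two, glue])
  let r₂ := P.compOp (j := k) (k := 1) e₁ (κ ≫ Φ.σ (k + 1) ≫ e₂)
    (by simp [e₁, e₂, κ, Coglob.σUp_two, Coglob.τUp_two, glue])
  have glp : Φ.σ (k + 1) ≫ p₁ = Φ.τ (k + 1) ≫ p₂ := by
    rw [P.σ_compOp_succ, P.τ_compOp_succ]; exact P.compOp_congr _ _ (by simp [κ]) (by simp [κ])
  have glr : Φ.σ (k + 1) ≫ r₁ = Φ.τ (k + 1) ≫ r₂ := by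
    rw [P.σ_compOp_succ, P.τ_compOp_succ]; exact P.compOp_congr _ _ (by simp [κ]) (by simp [κ])
  have e := htp_pull_of_par hC (by rw [GSums.dim_Btab]; omega)
    (f := P.vcompOp p₁ p₂ glp) (g := P.vcompOp r₁ r₂ glr)
    (by rw [P.σ_vcompOp, P.σ_vcompOp, P.σ_compOp_succ, P.σ_compOp_succ]
        exact P.compOp_congr _ _ (by simp [κ]) (by simp [κ]))
    (by rw [P.τ_vcompOp, P.τ_vcompOp, P.τ_compOp_succ, P.τ_compOp_succ]
        exact P.compOp_congr _ _ (by simp [κ]) (by simp [κ]))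
    (pairUp hm a b hc)
  simp only [p₁, p₂, r₁, r₂, pull_vcompOp hm, pull_compOp hm, pull_comp, e₁, e₂,
    pull_ε₁_pairUp, pull_ε₂_pairUp] at e
  exact e

end EckmannHilton

section Loops

variable {E : Type u} [Category.{v} E] {Φ : Coglob E} {GS : GSums Φ} {X : Eᵒᵖ ⥤ Type w}
variable (P : Pregroupoidal GS) (x : arr (Φ := Φ) X 0)

lemma gunit_unitIter (n : ℕ) : gunit P (unitIter P n x) = unitIter P (n + 1) x := by
  rw [gunit_eq_pull, unitIter_eq_pull, unitIter_eq_pull, ← pull_comp]; rfl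

@[simp]
lemma asrc_unitIter (n : ℕ) : asrc (unitIter P (n + 1) x) = unitIter P n x := by
  rw [← gunit_unitIter, asrc_gunit]

@[simp]
lemma atgt_unitIter (n : ℕ) : atgt (unitIter P (n + 1) x) = unitIter P n x := by
  rw [← gunit_unitIter, atgt_gunit]

lemma pull_rightPad_unitIter (j : ℕ) :
    pull (P.rightPad j) (unitIter P (j + 1) x) = pull (P.leftPad j) (unitIter P (j + 1) x) := by
  rw [unitIter_eq_pull, ← pull_comp, ← pull_comp, P.rightPad_kDown]

lemma exists_htp_gconj_rightPad₂ (hm : GS.IsModel X) (hC : GS.Contractible) (k : ℕ) :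
    ∃ c : arr (Φ := Φ) X (k + 2), asrc c = pull (P.rightPad k) (unitIter P (k + 1) x) ∧
      ∀ z : arr (Φ := Φ) X (k + 2), asrc z = unitIter P (k + 1) x →
        atgt z = unitIter P (k + 1) x → Htp (k + 2) z (gconj hm P c (pull (P.rightPad₂ k) z)) := by
  obtain ⟨ρ, hρσ, hρτ⟩ := hC.exists_globe_lift (m := k) (i := k + 1) (Nat.le_succ _)
    (P.rightPad k) (𝟙 _) (by rw [P.σ_rightPad, Category.comp_id])
    (by rw [P.τ_rightPad, Category.comp_id])
  refine ⟨pull ρ (unitIter P (k + 1) x), by rw [asrc_eq_pull, ← pull_comp, hρσ],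
    fun z hz₁ hz₂ => ?_⟩
  have conj := htp_conj_of_cell hm P hC (G := 𝟙 _) hρσ hρτ (P.σ_rightPad₂ k) (P.τ_rightPad₂ k)
    (by simp) (by simp) z
  rw [hz₁, hz₂, pull_id] at conj
  exact htp_symm P conj

variable {k : ℕ} {z : arr (Φ := Φ) X (k + 2)}

lemma pull_rightPad₂_of_asrc (hm : GS.IsModel X) (hz : asrc z = unitIter P (k + 1) x) :
    pull (P.rightPad₂ k) z = gcomp hm P k 1 z (unitIter P (k + 2) x) := by
  rw [pull_rightPad₂ hm, Coglob.σUp_two, pull_comp]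
  change gcomp hm P k 1 z (gunit P (gunit P (asrc (asrc z)))) = _
  rw [hz, asrc_unitIter, gunit_unitIter, gunit_unitIter]

lemma pull_leftPad₂_of_atgt (hm : GS.IsModel X) (hz : atgt z = unitIter P (k + 1) x) :
    pull (P.leftPad₂ k) z = gcomp hm P k 1 (unitIter P (k + 2) x) z := by
  rw [pull_leftPad₂ hm, Coglob.τUp_two, pull_comp]
  change gcomp hm P k 1 (gunit P (gunit P (atgt (atgt z)))) z = _
  rw [hz, atgt_unitIter, gunit_unitIter, gunit_unitIter]

/-- The two paddings are conjugate by `θ(1)` for a lifted cell `θ : leftPad ⇒ rightPad`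
(`htp_conj_of_cell`), and `θ(1)` is homotopic to a unit since both are operations on `x`. -/
lemma htp_pull_rightPad₂_leftPad₂ (hm : GS.IsModel X) (hC : GS.Contractible)
    (hz₁ : asrc z = unitIter P (k + 1) x) (hz₂ : atgt z = unitIter P (k + 1) x) :
    Htp (k + 2) (pull (P.rightPad₂ k) z) (pull (P.leftPad₂ k) z) := by
  obtain ⟨θ, hθσ, hθτ⟩ := hC.exists_globe_lift (m := k) (i := k + 1) (Nat.le_succ _)
    (P.leftPad k) (P.rightPad k)
    (by rw [P.σ_leftPad, P.σ_rightPad]) (by rw [P.τ_leftPad, P.τ_rightPad])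
  have conj := htp_conj_of_cell hm P hC hθσ hθτ (P.σ_leftPad₂ k) (P.τ_leftPad₂ k)
    (P.σ_rightPad₂ k) (P.τ_rightPad₂ k) z
  rw [hz₁, hz₂] at conj
  have hθ : Htp (k + 2) (pull θ (unitIter P (k + 1) x))
      (gunit P (asrc (pull (P.leftPad₂ k) z))) := by
    rw [asrc_pull_leftPad₂, hz₁, gunit_eq_pull, unitIter_eq_pull, ← pull_comp, ← pull_comp,
      ← pull_comp]
    refine htp_pull_of_par_globe hC (Nat.zero_le _) ?_ ?_ x
    · rw [← Category.assoc, hθσ, Category.assoc, P.kappa_σ_assoc]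
    · rw [← Category.assoc, hθτ, Category.assoc, P.kappa_τ_assoc, P.rightPad_kDown]
  refine htp_symm P (htp_trans hm P (htp_symm P ?_) conj)
  refine htp_gconj_of_htp_gunit hm P hC hθ ?_
  rw [asrc_pull_leftPad₂, atgt_eq_pull, ← pull_comp, P.τ_leftPad₂, pull_comp]
  change pull _ (atgt z) = pull _ (asrc z)
  rw [hz₁, hz₂]

lemma htp_pull_rightPad₂_gcomp_comm (hm : GS.IsModel X) (hC : GS.Contractible)
    {α β : arr (Φ := Φ) X (k + 2)}
    (hα₁ : asrc α = unitIter P (k + 1) x) (hα₂ : atgt α = unitIter P (k + 1) x)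
    (hβ₁ : asrc β = unitIter P (k + 1) x) (hβ₂ : atgt β = unitIter P (k + 1) x) :
    Htp (k + 2) (pull (P.rightPad₂ k) (gcomp hm P (k + 1) 0 α β))
      (pull (P.rightPad₂ k) (gcomp hm P (k + 1) 0 β α)) := by
  have hc : Composable k 1 α β := by
    change pull (Φ.σUp k 2) α = pull (Φ.τUp k 2) β
    rw [Coglob.σUp_two, Coglob.τUp_two, pull_comp, pull_comp]
    change asrc (asrc α) = atgt (atgt β)
    rw [hα₁, hβ₂, asrc_unitIter, atgt_unitIter]
  have interchange := htp_interchange hm P hC hc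
  rw [hα₁, hα₂, hβ₁, hβ₂, gunit_unitIter, ← pull_rightPad₂_of_asrc P x hm hα₁,
    ← pull_leftPad₂_of_atgt P x hm hβ₂] at interchange
  have hβ := htp_pull_rightPad₂_leftPad₂ P x hm hC hβ₁ hβ₂
  -- `pad α ∘ pad β ≃ pad α ∘ (1 * β) ≃ (1 * β) ∘ pad α ≃ pad β ∘ pad α`
  have swap := htp_trans hm P
    (htp_gcomp hm P (htp_refl P _) hβ (by
      rw [asrc_pull_rightPad₂, atgt_pull_rightPad₂, hα₁, hβ₂]))
    (htp_trans hm P interchange (htp_gcomp hm P (htp_symm P hβ) (htp_refl P _) (by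
      rw [asrc_pull_leftPad₂, atgt_pull_rightPad₂, hβ₁, hα₂, pull_rightPad_unitIter])))
  exact htp_trans hm P (htp_pull_rightPad₂_gcomp hm P hC (hα₁.trans hβ₂.symm))
    (htp_trans hm P swap (htp_symm P (htp_pull_rightPad₂_gcomp hm P hC (hβ₁.trans hα₂.symm))))

end Loops

theorem pi_n_abelian {E : Type u} [Category.{v} E] (Φ : Coglob E) (GS : GSums Φ)
    (hC : GS.Contractible) (X : Eᵒᵖ ⥤ Type w) (hm : GS.IsModel X)
    (P : Pregroupoidal GS) (k : ℕ) (x : arr (Φ := Φ) X 0) :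
    ∀ α β : arr (Φ := Φ) X (k + 2),
      asrc α = unitIter P (k + 1) x → atgt α = unitIter P (k + 1) x →
      asrc β = unitIter P (k + 1) x → atgt β = unitIter P (k + 1) x →
      Htp (k + 2) (gcomp hm P (k + 1) 0 α β) (gcomp hm P (k + 1) 0 β α) := by
  intro α β hα₁ hα₂ hβ₁ hβ₂
  obtain ⟨c, hc, hconj⟩ := exists_htp_gconj_rightPad₂ P x hm hC k
  have hαβ : asrc α = atgt β := hα₁.trans hβ₂.symm
  have hβα : asrc β = atgt α := hβ₁.trans hα₂.symm
  have conj_αβ := hconj _ ((asrc_gcomp hm P hαβ).trans hβ₁) ((atgt_gcomp hm P hαβ).trans hα₂)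
  have conj_βα := hconj _ ((asrc_gcomp hm P hβα).trans hα₁) ((atgt_gcomp hm P hβα).trans hβ₂)
  refine htp_trans hm P conj_αβ (htp_trans hm P ?_ (htp_symm P conj_βα))
  refine htp_gconj hm P (htp_pull_rightPad₂_gcomp_comm P x hm hC hα₁ hα₂ hβ₁ hβ₂) ?_ ?_
  · rw [asrc_pull_rightPad₂, asrc_gcomp hm P hαβ, hβ₁, hc]
  · rw [atgt_pull_rightPad₂, atgt_gcomp hm P hαβ, hα₂, hc]
end
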